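/- Let E be a real Banach space, m ≥ 1, and let u : ℝ → E be (m+1)-times continuously differentiable. Let τ > 0, set t_j := j·τ, and let n ≥ m. Then for all ℓ₁, ℓ₂ ∈ {0, 1, …, m} one has ‖∂_τ^{m−ℓ₁}(u^{(ℓ₁)})(t_n) − ∂_τ^{m−ℓ₂}(u^{(ℓ₂)})(t_n)‖ ≤ m · ∫_{t_{n−m}}^{t_n} ‖u^{(m+1)}(s)‖ ds, where ∂_τ^{k} is applied to the grid sequence j ↦ u^{(ℓ)}(t_j). -/

import Mathlib

/-- Backward difference quotient of a sequence: `∂_τ a j = (a j - a (j-1)) / τ`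
(with the `Nat` subtraction convention at `j = 0`). -/
noncomputable def dtau {E : Type*} [AddCommGroup E] [Module ℝ E] (τ : ℝ) (a : ℕ → E) :
    ℕ → E := fun j => τ⁻¹ • (a j - a (j - 1))

/-!
On the grid, `dtau` is the backward difference quotient `D f x = (f x - f (x - τ)) / τ` of
functions of a real variable, and `D` commutes with differentiation. Consecutive terms
`D^(k+1) v` and `D^k v'` (with `v = u^(ℓ)`, `k + 1 = m - ℓ`) differ by `D^k (D v - v')`, and the
Taylor defect `D v - v'` at `s` is at most `∫_{s-τ}^s ‖v''‖`. By the mean value inequality each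
further `D` widens such an `L¹` window by `τ`, so each step costs at most
`∫_{x-(m-ℓ)τ}^x ‖u^(m+1)‖`, and at most `m` steps separate any two terms.
-/

open MeasureTheory intervalIntegral Set

section BwdDiffQuot

variable {E : Type*} [NormedAddCommGroup E] [NormedSpace ℝ E] {τ : ℝ}

theorem iteratedDeriv_iteratedDeriv (i j : ℕ) (f : ℝ → E) :
    iteratedDeriv i (iteratedDeriv j f) = iteratedDeriv (i + j) f := by
  simp only [iteratedDeriv_eq_iterate, Function.iterate_add_apply]

theorem ContDiff.iteratedDeriv_of_add {i j : ℕ} {f : ℝ → E} (hf : ContDiff ℝ (j + i : ℕ) f) :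
    ContDiff ℝ i (iteratedDeriv j f) := by
  rw [iteratedDeriv_eq_iterate]
  exact (add_comm j i ▸ hf).iterate_deriv' i j

noncomputable def bwdDiffQuot (τ : ℝ) : (ℝ → E) →ₗ[ℝ] ℝ → E where
  toFun f x := τ⁻¹ • (f x - f (x - τ))
  map_add' f g := by
    funext x
    simp only [Pi.add_apply, ← smul_add]
    congr 1
    abel
  map_smul' c f := by
    funext x
    simp only [Pi.smul_apply, RingHom.id_apply, ← smul_sub, smul_comm c]

theorem bwdDiffQuot_apply (f : ℝ → E) (x : ℝ) :
    bwdDiffQuot τ f x = τ⁻¹ • (f x - f (x - τ)) := rfl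

theorem iterate_dtau_eq_iterate_bwdDiffQuot (f : ℝ → E) {k n : ℕ} (hkn : k ≤ n) :
    (dtau τ)^[k] (fun j : ℕ => f (j * τ)) n = (bwdDiffQuot τ)^[k] f (n * τ) := by
  induction k generalizing n with
  | zero => rfl
  | succ k ih =>
    have hcast : ((n - 1 : ℕ) : ℝ) * τ = n * τ - τ := by
      rw [Nat.cast_sub (by omega)]
      ring
    rw [Function.iterate_succ_apply', Function.iterate_succ_apply', bwdDiffQuot_apply, dtau,
      ih (by omega), ih (by omega), hcast]

theorem contDiff_bwdDiffQuot {k : WithTop ℕ∞} {f : ℝ → E} (hf : ContDiff ℝ k f) :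
    ContDiff ℝ k (bwdDiffQuot τ f) :=
  contDiff_const.smul (hf.sub (hf.comp (contDiff_id.sub contDiff_const)))

theorem iteratedDeriv_bwdDiffQuot {k : ℕ} {f : ℝ → E} (hf : ContDiff ℝ k f) :
    iteratedDeriv k (bwdDiffQuot τ f) = bwdDiffQuot τ (iteratedDeriv k f) := by
  funext x
  have hshift : ContDiff ℝ k fun y => f (y - τ) := hf.comp (contDiff_id.sub contDiff_const)
  have h := iteratedDeriv_fun_sub (x := x) hf.contDiffAt hshift.contDiffAt
  rw [iteratedDeriv_comp_sub_const] at h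
  simp only [bwdDiffQuot_apply, ← h]
  exact iteratedDeriv_fun_const_smul_field τ⁻¹ _

theorem norm_bwdDiffQuot_le_of_norm_deriv_le (hτ : 0 < τ) {f : ℝ → E} (hf : Differentiable ℝ f)
    {x C : ℝ} (bound : ∀ s ∈ Icc (x - τ) x, ‖deriv f s‖ ≤ C) : ‖bwdDiffQuot τ f x‖ ≤ C := by
  have hmvt := norm_image_sub_le_of_norm_deriv_le_segment'
    (fun s _ => (hf s).hasDerivAt.hasDerivWithinAt) (fun s hs => bound s (Ico_subset_Icc_self hs))
    x ⟨by linarith, le_rfl⟩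
  rw [sub_sub_cancel] at hmvt
  rw [bwdDiffQuot_apply, norm_smul, norm_inv, Real.norm_of_nonneg hτ.le, inv_mul_le_iff₀ hτ]
  linarith

theorem norm_iterate_bwdDiffQuot_le (hτ : 0 < τ) {H : ℝ → ℝ} (hH : Monotone H) (k : ℕ)
    {g : ℝ → E} {a : ℝ} (hg : ContDiff ℝ k g)
    (bound : ∀ s, ‖iteratedDeriv k g s‖ ≤ H s - H (s - a)) (x : ℝ) :
    ‖(bwdDiffQuot τ)^[k] g x‖ ≤ H x - H (x - (a + k * τ)) := by
  induction k generalizing g a with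
  | zero => simpa using bound x
  | succ k ih =>
    have hgk : ContDiff ℝ k g := hg.of_le (by exact_mod_cast k.le_succ)
    have hstep : ∀ s, ‖iteratedDeriv k (bwdDiffQuot τ g) s‖ ≤ H s - H (s - (a + τ)) := by
      intro s
      rw [iteratedDeriv_bwdDiffQuot hgk]
      refine norm_bwdDiffQuot_le_of_norm_deriv_le hτ
        (hg.differentiable_iteratedDeriv k (by exact_mod_cast k.lt_succ_self)) fun r hr => ?_
      rw [← iteratedDeriv_succ]
      have := bound r
      have := hH hr.2
      have := hH (show s - (a + τ) ≤ r - a by linarith [hr.1])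
      linarith
    have := ih (contDiff_bwdDiffQuot hgk) hstep
    rw [Function.iterate_succ_apply]
    convert this using 3
    push_cast
    ring

theorem norm_bwdDiffQuot_sub_deriv_le (hτ : 0 < τ) {f : ℝ → E} (hf : ContDiff ℝ 2 f) (x : ℝ) :
    ‖bwdDiffQuot τ f x - deriv f x‖ ≤ ∫ s in (x - τ)..x, ‖iteratedDeriv 2 f s‖ := by
  have hf' : ContDiff ℝ 1 (deriv f) := hf.deriv'
  have hf'' : Continuous (iteratedDeriv 2 f) := hf.continuous_iteratedDeriv 2 le_rfl
  -- subtracting the tangent line at `x` turns the defect into a plain difference quotient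
  set φ : ℝ → E := fun r => f r - r • deriv f x
  have hφ : Differentiable ℝ φ :=
    (hf.differentiable two_ne_zero).sub (differentiable_id.smul_const _)
  have hderiv : ∀ r, deriv φ r = deriv f r - deriv f x := fun r => by
    have := (((hf.differentiable two_ne_zero) r).hasDerivAt.sub
      ((hasDerivAt_id r).smul_const (deriv f x))).deriv
    rwa [one_smul] at this
  have hdefect : bwdDiffQuot τ φ x = bwdDiffQuot τ f x - deriv f x := by
    simp only [bwdDiffQuot_apply, φ, smul_sub, sub_smul, smul_smul, inv_mul_cancel₀ hτ.ne',
      one_smul]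
    abel
  rw [← hdefect]
  refine norm_bwdDiffQuot_le_of_norm_deriv_le hτ hφ fun r hr => ?_
  rw [hderiv, ← norm_sub_rev]
  calc ‖deriv f x - deriv f r‖ ≤ ∫ s in r..x, ‖iteratedDeriv 2 f s‖ := by
        refine norm_sub_le_integral_of_norm_deriv_le_of_le hr.2 hf'.continuous.continuousOn
          (hf'.differentiable one_ne_zero).differentiableOn (ae_of_all _ fun s _ => ?_)
          (hf''.norm.intervalIntegrable _ _)
        rw [iteratedDeriv_succ, iteratedDeriv_one]
    _ ≤ ∫ s in (x - τ)..x, ‖iteratedDeriv 2 f s‖ :=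
        integral_mono_interval hr.1 hr.2 le_rfl (ae_of_all _ fun s => norm_nonneg _)
          (hf''.norm.intervalIntegrable _ _)

theorem norm_iterate_bwdDiffQuot_sub_iterate_deriv_le (hτ : 0 < τ) (k : ℕ) {v : ℝ → E}
    (hv : ContDiff ℝ (k + 2 : ℕ) v) (x : ℝ) :
    ‖(bwdDiffQuot τ)^[k + 1] v x - (bwdDiffQuot τ)^[k] (deriv v) x‖ ≤
      ∫ s in (x - (k + 1) * τ)..x, ‖iteratedDeriv (k + 2) v s‖ := by
  set h : ℝ → ℝ := fun s => ‖iteratedDeriv (k + 2) v s‖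
  have hint : ∀ a b, IntervalIntegrable h volume a b := fun a b =>
    (hv.continuous_iteratedDeriv _ le_rfl).norm.intervalIntegrable a b
  set H : ℝ → ℝ := fun y => ∫ s in (0 : ℝ)..y, h s
  have hH_sub : ∀ a b, H b - H a = ∫ s in a..b, h s := fun a b =>
    integral_interval_sub_left (hint 0 b) (hint 0 a)
  have hH : Monotone H := fun a b hab => by
    have := hH_sub a b
    have := integral_nonneg (μ := volume) hab fun s _ => norm_nonneg (iteratedDeriv (k + 2) v s)
    linarith
  have hvk : ContDiff ℝ k v := hv.of_le (by exact_mod_cast (k.le_add_right 2))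
  have hv' : ContDiff ℝ k (deriv v) := (hv.of_le (by exact_mod_cast (by omega))).deriv'
  have hw : ContDiff ℝ k (bwdDiffQuot τ v - deriv v) := (contDiff_bwdDiffQuot hvk).sub hv'
  have hbound : ∀ s, ‖iteratedDeriv k (bwdDiffQuot τ v - deriv v) s‖ ≤ H s - H (s - τ) := by
    intro s
    rw [iteratedDeriv_sub (contDiff_bwdDiffQuot hvk).contDiffAt hv'.contDiffAt,
      iteratedDeriv_bwdDiffQuot hvk, ← iteratedDeriv_succ', iteratedDeriv_succ, hH_sub]
    have := norm_bwdDiffQuot_sub_deriv_le hτ (ContDiff.iteratedDeriv_of_add (i := 2) hv) s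
    rwa [iteratedDeriv_iteratedDeriv, add_comm 2] at this
  have := norm_iterate_bwdDiffQuot_le hτ hH k hw hbound x
  rw [hH_sub] at this
  rw [Function.iterate_succ_apply, ← Pi.sub_apply, ← iterate_map_sub]
  convert this using 3
  ring

theorem norm_iterate_bwdDiffQuot_iteratedDeriv_sub_succ_le (hτ : 0 < τ) {m i : ℕ} (hi : i < m)
    {u : ℝ → E} (hu : ContDiff ℝ (m + 1 : ℕ) u) (x : ℝ) :
    ‖(bwdDiffQuot τ)^[m - i] (iteratedDeriv i u) x -
        (bwdDiffQuot τ)^[m - (i + 1)] (iteratedDeriv (i + 1) u) x‖ ≤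
      ∫ s in (x - m * τ)..x, ‖iteratedDeriv (m + 1) u s‖ := by
  obtain ⟨k, rfl⟩ : ∃ k, m = i + k + 1 := ⟨m - i - 1, by omega⟩
  have hv : ContDiff ℝ (k + 2 : ℕ) (iteratedDeriv i u) :=
    ContDiff.iteratedDeriv_of_add (by convert hu using 2; omega)
  have := norm_iterate_bwdDiffQuot_sub_iterate_deriv_le hτ k hv x
  rw [← iteratedDeriv_succ, iteratedDeriv_iteratedDeriv,
    show k + 2 + i = i + k + 1 + 1 by omega] at this
  rw [show i + k + 1 - i = k + 1 by omega, show i + k + 1 - (i + 1) = k by omega]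
  refine this.trans (integral_mono_interval ?_ ?_ le_rfl
    (ae_of_all _ fun s => norm_nonneg _)
    ((hu.continuous_iteratedDeriv _ le_rfl).norm.intervalIntegrable _ _))
  · push_cast
    nlinarith
  · nlinarith

theorem norm_iterate_bwdDiffQuot_iteratedDeriv_sub_le (hτ : 0 < τ) {m : ℕ} {u : ℝ → E}
    (hu : ContDiff ℝ (m + 1 : ℕ) u) {ℓ₁ ℓ₂ : ℕ} (hℓ₁ : ℓ₁ ≤ m) (hℓ₂ : ℓ₂ ≤ m) (x : ℝ) :
    ‖(bwdDiffQuot τ)^[m - ℓ₁] (iteratedDeriv ℓ₁ u) x -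
        (bwdDiffQuot τ)^[m - ℓ₂] (iteratedDeriv ℓ₂ u) x‖ ≤
      m * ∫ s in (x - m * τ)..x, ‖iteratedDeriv (m + 1) u s‖ := by
  wlog h : ℓ₁ ≤ ℓ₂ generalizing ℓ₁ ℓ₂
  · rw [norm_sub_rev]
    exact this hℓ₂ hℓ₁ (le_of_not_ge h)
  set c : ℕ → E := fun i => (bwdDiffQuot τ)^[m - i] (iteratedDeriv i u) x
  set I := ∫ s in (x - m * τ)..x, ‖iteratedDeriv (m + 1) u s‖
  have hI : 0 ≤ I := integral_nonneg (by nlinarith) fun s _ => norm_nonneg _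
  calc ‖c ℓ₁ - c ℓ₂‖ = dist (c ℓ₁) (c ℓ₂) := (dist_eq_norm _ _).symm
    _ ≤ ∑ i ∈ Finset.Ico ℓ₁ ℓ₂, dist (c i) (c (i + 1)) := dist_le_Ico_sum_dist c h
    _ ≤ (Finset.Ico ℓ₁ ℓ₂).card • I := Finset.sum_le_card_nsmul _ _ _ fun i hi => by
        rw [dist_eq_norm]
        exact norm_iterate_bwdDiffQuot_iteratedDeriv_sub_succ_le hτ
          (by rw [Finset.mem_Ico] at hi; omega) hu x
    _ ≤ m * I := by
        rw [Nat.card_Ico, nsmul_eq_mul]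
        gcongr
        exact_mod_cast (by omega : ℓ₂ - ℓ₁ ≤ m)

end BwdDiffQuot

theorem discrete_derivative_defect_L1_estimate_general
    {E : Type*} [NormedAddCommGroup E] [NormedSpace ℝ E]
    (m : ℕ) (u : ℝ → E) (hu : ContDiff ℝ (m + 1 : ℕ) u)
    (τ : ℝ) (hτ : 0 < τ) (n : ℕ) (hn : m ≤ n)
    (ℓ₁ ℓ₂ : ℕ) (hℓ₁ : ℓ₁ ≤ m) (hℓ₂ : ℓ₂ ≤ m) :
    ‖(dtau τ)^[m - ℓ₁] (fun j : ℕ => iteratedDeriv ℓ₁ u ((j : ℝ) * τ)) n -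
        (dtau τ)^[m - ℓ₂] (fun j : ℕ => iteratedDeriv ℓ₂ u ((j : ℝ) * τ)) n‖ ≤
      (m : ℝ) *
        ∫ s in (((n - m : ℕ) : ℝ) * τ)..((n : ℝ) * τ),
          ‖iteratedDeriv (m + 1) u s‖ := by
  rw [iterate_dtau_eq_iterate_bwdDiffQuot _ (by omega),
    iterate_dtau_eq_iterate_bwdDiffQuot _ (by omega), Nat.cast_sub hn, sub_mul]
  exact norm_iterate_bwdDiffQuot_iteratedDeriv_sub_le hτ hu hℓ₁ hℓ₂ _

/-- The key L¹-in-time bound from the appendix proof of Lemma 4.2 of the paper: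
mixed discrete/continuous derivatives of total order `m` of a `C^{m+1}` function differ
by at most `m ∫_{t_{n-m}}^{t_n} ‖u^{(m+1)}‖`. -/
theorem discrete_derivative_defect_L1_estimate
    {E : Type*} [NormedAddCommGroup E] [NormedSpace ℝ E]
    (m : ℕ) (hm : 1 ≤ m) (u : ℝ → E) (hu : ContDiff ℝ (m + 1 : ℕ) u)
    (τ : ℝ) (hτ : 0 < τ) (n : ℕ) (hn : m ≤ n)
    (ℓ₁ ℓ₂ : ℕ) (hℓ₁ : ℓ₁ ≤ m) (hℓ₂ : ℓ₂ ≤ m) :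
    ‖(dtau τ)^[m - ℓ₁] (fun j : ℕ => iteratedDeriv ℓ₁ u ((j : ℝ) * τ)) n -
        (dtau τ)^[m - ℓ₂] (fun j : ℕ => iteratedDeriv ℓ₂ u ((j : ℝ) * τ)) n‖ ≤
      (m : ℝ) *
        ∫ s in (((n - m : ℕ) : ℝ) * τ)..((n : ℝ) * τ),
          ‖iteratedDeriv (m + 1) u s‖ :=
  discrete_derivative_defect_L1_estimate_general m u hu τ hτ n hn ℓ₁ ℓ₂ hℓ₁ hℓ₂
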